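/- For 0 < ε₁ < ε₂ define E₀(ε₁,ε₂) = (1/√2) | 2 − ((ε₁²+1)²/(ε₁(ε₂²−ε₁²))) arctan ε₁ + ((ε₂²+1)²/(ε₂(ε₂²−ε₁²))) arctan ε₂ − ((ε₂²+1)² π)/(2ε₂(ε₂²−ε₁²)) + ((ε₁²+1)² π)/(2ε₁(ε₂²−ε₁²)) |, E_I(ε₁,ε₂) = (1/√2) | 2 − ((ε₂²+1)²/(ε₂(ε₂²−ε₁²))) arctan ε₂ + ((ε₁²+1)²/(ε₁(ε₂²−ε₁²))) arctan ε₁ + ((ε₂²+1)² π)/(2ε₂(ε₂²−ε₁²)) |, and E_II(ε₁,ε₂) = (1/√2) | 2 + ((ε₂²+1)²/(ε₂(ε₂²−ε₁²))) arctan ε₂ − ((ε₁²+1)²/(ε₁(ε₂²−ε₁²))) arctan ε₁ |. Then: (a) for each fixed ε₁ > 0, E_I(ε₁,ε₂) > E_II(ε₁,ε₂) for ε₂ sufficiently close to ε₁ from above, and E_I(ε₁,ε₂) < E_II(ε₁,ε₂) for ε₂ sufficiently large, so that for each ε₁ > 0 there exists σ(ε₁) ∈ (ε₁, ∞) with E_I(ε₁,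 σ(ε₁)) = E_II(ε₁, σ(ε₁)); (b) there exist ε₁* > 0 and a continuous function σ* : (0, ε₁*) → ℝ with σ*(ε₁) > ε₁ such that E_II(ε₁, σ*(ε₁)) = E_I(ε₁, σ*(ε₁)) < E₀(ε₁, σ*(ε₁)) for all ε₁ ∈ (0, ε₁*). -/

import Mathlib

/-!
Write `A t = (t² + 1)² / t`, `F = A · arctan` and `G = A · (π/2 - 2 arctan)`. For `0 < ε₁ < ε₂`
the three absolute values have positive arguments (for `E_II` because `F` is increasing on
`(0, ∞)`), and `E_I - E_II = (G ε₂ + 2 F ε₁) / (√2 (ε₂² - ε₁²))`. At `ε₂ = ε₁` the numerator is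
`A ε₁ · π/2 > 0`, while `G → -∞`; this gives (a).

On `[1, 2]` the function `G` decreases strictly from `0` to below `-25/4`, so for small `ε₁` the
crossing equation `G σ = -2 F ε₁` has a root `σ*(ε₁) ∈ (1, 2)`, continuous in `ε₁` as the inverse
of a continuous strictly monotone function. At a crossing, `E_I < E₀` reduces to
`A σ* < A ε₁`, which holds since `A ε₁ ≥ 1/ε₁` is large.
-/

open Real

noncomputable section

/-- Action of the scalar connection `e₀` of the potential `W₂`. -/
def E0 (ε₁ ε₂ : ℝ) : ℝ :=
  (1 / Real.sqrt 2) *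
    |2 - ((ε₁ ^ 2 + 1) ^ 2 / (ε₁ * (ε₂ ^ 2 - ε₁ ^ 2))) * arctan ε₁
       + ((ε₂ ^ 2 + 1) ^ 2 / (ε₂ * (ε₂ ^ 2 - ε₁ ^ 2))) * arctan ε₂
       - ((ε₂ ^ 2 + 1) ^ 2 * π) / (2 * ε₂ * (ε₂ ^ 2 - ε₁ ^ 2))
       + ((ε₁ ^ 2 + 1) ^ 2 * π) / (2 * ε₁ * (ε₂ ^ 2 - ε₁ ^ 2))|

/-- Action of the inner pair of connections `e¹_±` of the potential `W₂`. -/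
def EI (ε₁ ε₂ : ℝ) : ℝ :=
  (1 / Real.sqrt 2) *
    |2 - ((ε₂ ^ 2 + 1) ^ 2 / (ε₂ * (ε₂ ^ 2 - ε₁ ^ 2))) * arctan ε₂
       + ((ε₁ ^ 2 + 1) ^ 2 / (ε₁ * (ε₂ ^ 2 - ε₁ ^ 2))) * arctan ε₁
       + ((ε₂ ^ 2 + 1) ^ 2 * π) / (2 * ε₂ * (ε₂ ^ 2 - ε₁ ^ 2))|

/-- Action of the outer pair of connections `e²_±` of the potential `W₂`. -/
def EII (ε₁ ε₂ : ℝ) : ℝ :=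
  (1 / Real.sqrt 2) *
    |2 + ((ε₂ ^ 2 + 1) ^ 2 / (ε₂ * (ε₂ ^ 2 - ε₁ ^ 2))) * arctan ε₂
       - ((ε₁ ^ 2 + 1) ^ 2 / (ε₁ * (ε₂ ^ 2 - ε₁ ^ 2))) * arctan ε₁|

theorem Real.arctan_le_self {x : ℝ} (hx : 0 ≤ x) : arctan x ≤ x := by
  simpa only [tan_arctan] using le_tan (arctan_nonneg.2 hx) (arctan_lt_pi_div_two x)

section InverseOfAntitone

open Set Function Topology

variable {g : ℝ → ℝ} {a b y : ℝ}

theorem invFunOn_Icc_mem_Ioo (hab : a ≤ b) (hg : ContinuousOn g (Icc a b))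
    (hy : y ∈ Ioo (g b) (g a)) :
    invFunOn g (Icc a b) y ∈ Ioo a b ∧ g (invFunOn g (Icc a b) y) = y := by
  have hex : ∃ x ∈ Icc a b, g x = y := intermediate_value_Icc' hab hg (Ioo_subset_Icc_self hy)
  have hmem := invFunOn_mem hex
  have heq := invFunOn_eq hex
  refine ⟨⟨lt_of_le_of_ne hmem.1 ?_, lt_of_le_of_ne hmem.2 ?_⟩, heq⟩
  · rintro h
    rw [← h] at heq
    exact hy.2.ne heq.symm
  · rintro h
    rw [h] at heq
    exact hy.1.ne heq

theorem continuousOn_invFunOn_Icc (hab : a ≤ b) (hg : ContinuousOn g (Icc a b))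
    (hanti : StrictAntiOn g (Icc a b)) :
    ContinuousOn (invFunOn g (Icc a b)) (Ioo (g b) (g a)) := by
  set h := invFunOn g (Icc a b)
  have hsurj : SurjOn g (Icc a b) (Icc (g b) (g a)) := intermediate_value_Icc' hab hg
  have hmaps : MapsTo h (Icc (g b) (g a)) (Icc a b) := fun z hz => invFunOn_mem (hsurj hz)
  have hright : ∀ z ∈ Icc (g b) (g a), g (h z) = z := fun z hz => invFunOn_eq (hsurj hz)
  have hanti' : StrictAntiOn h (Icc (g b) (g a)) := by
    intro z₁ hz₁ z₂ hz₂ hlt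
    by_contra! hle
    have := hanti.antitoneOn (hmaps hz₁) (hmaps hz₂) hle
    rw [hright z₁ hz₁, hright z₂ hz₂] at this
    exact hlt.not_ge this
  have himage : Icc a b ⊆ h '' Icc (g b) (g a) := by
    intro x hx
    have hgx : g x ∈ Icc (g b) (g a) :=
      ⟨hanti.antitoneOn hx (right_mem_Icc.2 hab) hx.2,
        hanti.antitoneOn (left_mem_Icc.2 hab) hx hx.1⟩
    exact ⟨g x, hgx, hanti.injOn (hmaps hgx) hx (hright _ hgx)⟩
  intro y hy
  obtain ⟨hmem, -⟩ := invFunOn_Icc_mem_Ioo hab hg hy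
  have hnhds : h '' Icc (g b) (g a) ∈ 𝓝 (h y) :=
    Filter.mem_of_superset (Icc_mem_nhds hmem.1 hmem.2) himage
  -- `ℝᵒᵈ` carries the topology of `ℝ`, so continuity of `toDual ∘ h` is continuity of `h`.
  exact (hanti'.dual_right.continuousAt_of_image_mem_nhds (Icc_mem_nhds hy.1 hy.2) hnhds)
    |>.continuousWithinAt

end InverseOfAntitone

namespace EqualAction

open Set Filter Topology

def A (t : ℝ) : ℝ := (t ^ 2 + 1) ^ 2 / t

def F (t : ℝ) : ℝ := A t * arctan t

def G (t : ℝ) : ℝ := A t * (π / 2 - 2 * arctan t)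

theorem A_pos {t : ℝ} (ht : 0 < t) : 0 < A t := by unfold A; positivity

theorem self_le_A {t : ℝ} (ht : 0 < t) : t ≤ A t := by
  rw [A, le_div_iff₀ ht]
  nlinarith [sq_nonneg t, sq_nonneg (t ^ 2)]

theorem inv_le_A {t : ℝ} (ht : 0 < t) : t⁻¹ ≤ A t := by
  rw [A, ← one_div]
  gcongr
  nlinarith [sq_nonneg t]

theorem A_two : A 2 = 25 / 2 := by norm_num [A]

theorem strictMonoOn_A : StrictMonoOn A (Ici 1) := by
  intro s (hs : 1 ≤ s) t (ht : 1 ≤ t) hst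
  rw [A, A, div_lt_div_iff₀ (by linarith) (by linarith)]
  have key : (t ^ 2 + 1) ^ 2 * s - (s ^ 2 + 1) ^ 2 * t
      = (t - s) * (s * t * (t ^ 2 + s * t + s ^ 2) + 2 * s * t - 1) := by ring
  have hst1 : 1 ≤ s * t := by nlinarith
  have : 0 < s * t * (t ^ 2 + s * t + s ^ 2) + 2 * s * t - 1 := by nlinarith
  nlinarith [mul_pos (sub_pos.2 hst) this]

theorem continuousOn_A : ContinuousOn A (Ioi 0) :=
  ContinuousOn.div (by fun_prop) continuousOn_id fun _ ht => ne_of_gt ht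

theorem continuousOn_F : ContinuousOn F (Ioi 0) :=
  continuousOn_A.mul continuous_arctan.continuousOn

theorem continuousOn_G : ContinuousOn G (Ioi 0) :=
  continuousOn_A.mul (by fun_prop)

theorem F_pos {t : ℝ} (ht : 0 < t) : 0 < F t := mul_pos (A_pos ht) (arctan_pos.2 ht)

theorem F_le {t : ℝ} (ht : 0 < t) : F t ≤ (t ^ 2 + 1) ^ 2 := by
  calc F t ≤ A t * t := mul_le_mul_of_nonneg_left (arctan_le_self ht.le) (A_pos ht).le
    _ = (t ^ 2 + 1) ^ 2 := by rw [A]; field_simp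

theorem F_lt_A_mul {t : ℝ} (ht : 0 < t) : F t < A t * (π / 2) :=
  mul_lt_mul_of_pos_left (arctan_lt_pi_div_two t) (A_pos ht)

theorem hasDerivAt_F {x : ℝ} (hx : 0 < x) :
    HasDerivAt F ((x ^ 2 + 1) * ((3 * x ^ 2 - 1) * arctan x + x) / x ^ 2) x := by
  have hA : HasDerivAt A _ x :=
    (((hasDerivAt_pow 2 x).add_const 1).fun_pow 2).fun_div (hasDerivAt_id' x) hx.ne'
  refine (hA.fun_mul (hasDerivAt_arctan x)).congr_deriv ?_
  simp only [A]
  field_simp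
  ring

theorem strictMonoOn_F : StrictMonoOn F (Ioi 0) := by
  refine strictMonoOn_of_hasDerivWithinAt_pos (convex_Ioi 0) continuousOn_F
    (fun x hx => (hasDerivAt_F (interior_subset hx)).hasDerivWithinAt) fun x hx => ?_
  rw [interior_Ioi] at hx
  have hx : 0 < x := hx
  have hat := arctan_pos.2 hx
  have hle := arctan_le_self hx.le
  have : 0 < (3 * x ^ 2 - 1) * arctan x + x := by nlinarith [mul_pos (mul_pos hx hx) hat]
  positivity

theorem G_add_two_mul_F (t : ℝ) : G t + 2 * F t = A t * (π / 2) := by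
  unfold G F; ring

theorem G_add_two_mul_F_pos {t : ℝ} (ht : 0 < t) : 0 < G t + 2 * F t := by
  rw [G_add_two_mul_F]; exact mul_pos (A_pos ht) (by positivity)

theorem G_one : G 1 = 0 := by
  rw [G, arctan_one]; ring

theorem pi_div_two_sub_two_mul_arctan_lt {t : ℝ} (ht : 2 ≤ t) :
    π / 2 - 2 * arctan t < -(1 / 2) := by
  have h2 : π / 2 - 1 / 2 ≤ arctan 2 := by
    have := arctan_le_self (show (0 : ℝ) ≤ 2⁻¹ by norm_num)
    rw [arctan_inv_of_pos two_pos] at this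
    linarith
  have := arctan_strictMono.monotone ht
  linarith [pi_gt_three]

theorem G_lt_neg_half_A {t : ℝ} (ht : 2 ≤ t) : G t < -(A t / 2) := by
  have := mul_lt_mul_of_pos_left (pi_div_two_sub_two_mul_arctan_lt ht) (A_pos (by linarith))
  rw [G]; linarith

theorem strictAntiOn_G : StrictAntiOn G (Ici 1) := by
  intro s (hs : 1 ≤ s) t (ht : 1 ≤ t) hst
  have hA := strictMonoOn_A hs ht hst
  have hBt : π / 2 - 2 * arctan t < π / 2 - 2 * arctan s := by
    linarith [arctan_strictMono hst]
  have hBs : π / 2 - 2 * arctan s ≤ 0 := by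
    linarith [arctan_one ▸ arctan_strictMono.monotone hs]
  have hAs := A_pos (by linarith : (0 : ℝ) < s)
  calc G t < A s * (π / 2 - 2 * arctan t) := mul_lt_mul_of_neg_right hA (hBt.trans_le hBs)
    _ < G s := mul_lt_mul_of_pos_left hBt hAs

theorem tendsto_G_atTop : Tendsto G atTop atBot := by
  refine tendsto_atBot_mono' atTop ?_
    (tendsto_id.const_mul_atTop_of_neg (by norm_num : -(1 / 2 : ℝ) < 0))
  filter_upwards [eventually_ge_atTop 2] with t ht
  have := self_le_A (by linarith : (0 : ℝ) < t)
  rw [id]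
  linarith [G_lt_neg_half_A ht]

section Actions

variable {e₁ e₂ : ℝ}

theorem EI_eq (h₁ : 0 < e₁) (h₁₂ : e₁ < e₂) :
    EI e₁ e₂ = 1 / √2 * (2 + (F e₁ - F e₂ + A e₂ * (π / 2)) / (e₂ ^ 2 - e₁ ^ 2)) := by
  have h₂ : 0 < e₂ := h₁.trans h₁₂
  have hD : 0 < e₂ ^ 2 - e₁ ^ 2 := by nlinarith
  have hN : 0 < F e₁ - F e₂ + A e₂ * (π / 2) := by linarith [F_pos h₁, F_lt_A_mul h₂]
  have hpos : 0 < 2 + (F e₁ - F e₂ + A e₂ * (π / 2)) / (e₂ ^ 2 - e₁ ^ 2) := by positivity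
  rw [EI, ← abs_of_pos hpos]
  congr 2
  unfold F A
  field_simp
  ring

theorem EII_eq (h₁ : 0 < e₁) (h₁₂ : e₁ < e₂) :
    EII e₁ e₂ = 1 / √2 * (2 + (F e₂ - F e₁) / (e₂ ^ 2 - e₁ ^ 2)) := by
  have hD : 0 < e₂ ^ 2 - e₁ ^ 2 := by nlinarith
  have hN : 0 < F e₂ - F e₁ := sub_pos.2 (strictMonoOn_F h₁ (h₁.trans h₁₂) h₁₂)
  have hpos : 0 < 2 + (F e₂ - F e₁) / (e₂ ^ 2 - e₁ ^ 2) := by positivity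
  rw [EII, ← abs_of_pos hpos]
  congr 2
  unfold F A
  field_simp
  ring

theorem le_E0 (h₁ : 0 < e₁) (h₁₂ : e₁ < e₂) :
    1 / √2 * (2 + (F e₂ - F e₁ + (A e₁ - A e₂) * (π / 2)) / (e₂ ^ 2 - e₁ ^ 2)) ≤ E0 e₁ e₂ := by
  have hD : 0 < e₂ ^ 2 - e₁ ^ 2 := by nlinarith
  rw [E0]
  gcongr
  refine le_of_eq_of_le ?_ (le_abs_self _)
  unfold F A
  field_simp
  ring

theorem EI_sub_EII (h₁ : 0 < e₁) (h₁₂ : e₁ < e₂) :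
    EI e₁ e₂ - EII e₁ e₂ = (G e₂ + 2 * F e₁) / (√2 * (e₂ ^ 2 - e₁ ^ 2)) := by
  have hD : 0 < e₂ ^ 2 - e₁ ^ 2 := by nlinarith
  rw [EI_eq h₁ h₁₂, EII_eq h₁ h₁₂, G]
  field_simp
  unfold F
  ring

theorem EI_eq_EII (h₁ : 0 < e₁) (h₁₂ : e₁ < e₂) (hcross : G e₂ + 2 * F e₁ = 0) :
    EI e₁ e₂ = EII e₁ e₂ := by
  rw [← sub_eq_zero, EI_sub_EII h₁ h₁₂, hcross, zero_div]

theorem EI_lt_E0_of_crossing (h₁ : 0 < e₁) (h₁₂ : e₁ < e₂) (hcross : G e₂ + 2 * F e₁ = 0)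
    (hA : A e₂ < A e₁) : EI e₁ e₂ < E0 e₁ e₂ := by
  have hD : 0 < e₂ ^ 2 - e₁ ^ 2 := by nlinarith
  refine (EI_eq h₁ h₁₂).trans_lt (lt_of_lt_of_le ?_ (le_E0 h₁ h₁₂))
  gcongr 1 / √2 * (2 + ?_ / _)
  -- At a crossing `2 F e₂ = A e₂ π/2 + 2 F e₁`, so the numerators differ by `(A e₁ - A e₂) π/2`.
  linarith [G_add_two_mul_F e₂, mul_pos (sub_pos.2 hA) pi_pos]

end Actions

theorem eventually_EII_lt_EI {ε₁ : ℝ} (h₁ : 0 < ε₁) :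
    ∀ᶠ ε₂ in 𝓝[>] ε₁, EII ε₁ ε₂ < EI ε₁ ε₂ := by
  have hpos := G_add_two_mul_F_pos h₁
  have hG : ContinuousAt G ε₁ := continuousOn_G.continuousAt (Ioi_mem_nhds h₁)
  filter_upwards [nhdsWithin_le_nhds ((hG.add continuousAt_const).eventually (lt_mem_nhds hpos)),
    self_mem_nhdsWithin] with ε₂ hε₂ (h₁₂ : ε₁ < ε₂)
  rw [← sub_pos, EI_sub_EII h₁ h₁₂]
  exact div_pos hε₂ (mul_pos (by positivity) (by nlinarith))

theorem eventually_EI_lt_EII {ε₁ : ℝ} (h₁ : 0 < ε₁) :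
    ∀ᶠ ε₂ in atTop, EI ε₁ ε₂ < EII ε₁ ε₂ := by
  filter_upwards [tendsto_G_atTop.eventually_lt_atBot (-(2 * F ε₁)), eventually_gt_atTop ε₁]
    with ε₂ hG h₁₂
  rw [← sub_neg, EI_sub_EII h₁ h₁₂]
  exact div_neg_of_neg_of_pos (by linarith) (mul_pos (by positivity) (by nlinarith))

theorem exists_crossing {ε₁ : ℝ} (h₁ : 0 < ε₁) : ∃ σ, ε₁ < σ ∧ G σ + 2 * F ε₁ = 0 := by
  obtain ⟨T, hT⟩ := (tendsto_G_atTop.eventually_lt_atBot (-(2 * F ε₁))).exists_forall_of_atTop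
  have hpos := G_add_two_mul_F_pos h₁
  have hcont : ContinuousOn (fun t => G t + 2 * F ε₁) (Icc ε₁ (max ε₁ T)) :=
    (continuousOn_G.mono fun t ht => h₁.trans_le ht.1).add continuousOn_const
  obtain ⟨σ, hσ, hzero⟩ := intermediate_value_Icc' (le_max_left ε₁ T) hcont
    ⟨by linarith [hT (max ε₁ T) (le_max_right ε₁ T)], hpos.le⟩
  exact ⟨σ, lt_of_le_of_ne hσ.1 (by rintro rfl; exact hpos.ne' hzero), hzero⟩

def σstar (x : ℝ) : ℝ := Function.invFunOn G (Icc 1 2) (-(2 * F x))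

theorem neg_two_mul_F_mem {x : ℝ} (hx : x ∈ Ioo 0 (2 / 25)) : -(2 * F x) ∈ Ioo (G 2) (G 1) := by
  obtain ⟨hx₀, hx₁⟩ := hx
  have hx2 : x ^ 2 < 1 / 4 := by nlinarith
  have hF : F x < 2 := (F_le hx₀).trans_lt (by nlinarith)
  have hG2 := G_lt_neg_half_A le_rfl
  rw [A_two] at hG2
  rw [G_one]
  constructor <;> linarith [F_pos hx₀]

theorem σstar_spec {x : ℝ} (hx : x ∈ Ioo 0 (2 / 25)) :
    σstar x ∈ Ioo 1 2 ∧ G (σstar x) = -(2 * F x) :=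
  invFunOn_Icc_mem_Ioo one_le_two (continuousOn_G.mono fun _ ht => zero_lt_one.trans_le ht.1)
    (neg_two_mul_F_mem hx)

theorem continuousOn_σstar : ContinuousOn σstar (Ioo 0 (2 / 25)) :=
  (continuousOn_invFunOn_Icc one_le_two
    (continuousOn_G.mono fun _ ht => zero_lt_one.trans_le ht.1)
    (strictAntiOn_G.mono Icc_subset_Ici_self)).comp
    (continuousOn_const.mul (continuousOn_F.mono Ioo_subset_Ioi_self)).neg
    fun _ hx => neg_two_mul_F_mem hx

theorem A_σstar_lt {x : ℝ} (hx : x ∈ Ioo 0 (2 / 25)) : A (σstar x) < A x := by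
  obtain ⟨⟨hσ₁, hσ₂⟩, -⟩ := σstar_spec hx
  calc A (σstar x) < A 2 := strictMonoOn_A (mem_Ici.2 hσ₁.le) (mem_Ici.2 one_le_two) hσ₂
    _ = 25 / 2 := A_two
    _ < x⁻¹ := by rw [lt_inv_comm₀ (by norm_num) hx.1]; linarith [hx.2]
    _ ≤ A x := inv_le_A hx.1

end EqualAction

open EqualAction

/-- (a) For each fixed `ε₁ > 0`, `E_I > E_II` for `ε₂` close to `ε₁`
from above and `E_I < E_II` for large `ε₂`, so the two actions cross at some
`σ(ε₁) > ε₁`.  (b) There are `ε₁* > 0` and a continuous `σ* : (0, ε₁*) → ℝ` with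
`σ*(ε₁) > ε₁` and `E_II(ε₁,σ*(ε₁)) = E_I(ε₁,σ*(ε₁)) < E₀(ε₁,σ*(ε₁))`. -/
theorem equal_action_curve :
    (∀ ε₁ : ℝ, 0 < ε₁ →
      (∃ δ > (0 : ℝ), ∀ ε₂ : ℝ, ε₁ < ε₂ → ε₂ < ε₁ + δ → EII ε₁ ε₂ < EI ε₁ ε₂) ∧
      (∃ T : ℝ, ∀ ε₂ : ℝ, T ≤ ε₂ → EI ε₁ ε₂ < EII ε₁ ε₂) ∧
      (∃ σ : ℝ, ε₁ < σ ∧ EI ε₁ σ = EII ε₁ σ)) ∧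
    (∃ ε₁s : ℝ, 0 < ε₁s ∧ ∃ σs : ℝ → ℝ, ContinuousOn σs (Set.Ioo 0 ε₁s) ∧
      ∀ ε₁ ∈ Set.Ioo (0 : ℝ) ε₁s, ε₁ < σs ε₁ ∧
        EII ε₁ (σs ε₁) = EI ε₁ (σs ε₁) ∧ EI ε₁ (σs ε₁) < E0 ε₁ (σs ε₁)) := by
  refine ⟨fun ε₁ h₁ => ⟨?_, ?_, ?_⟩,
    ⟨2 / 25, by norm_num, σstar, continuousOn_σstar, fun x hx => ?_⟩⟩
  · obtain ⟨u, hu, hsub⟩ := mem_nhdsGT_iff_exists_Ioo_subset.1 (eventually_EII_lt_EI h₁)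
    exact ⟨u - ε₁, sub_pos.2 hu, fun ε₂ h h' => hsub ⟨h, by linarith⟩⟩
  · exact Filter.eventually_atTop.1 (eventually_EI_lt_EII h₁)
  · obtain ⟨σ, h₁σ, hcross⟩ := exists_crossing h₁
    exact ⟨σ, h₁σ, EI_eq_EII h₁ h₁σ hcross⟩
  · obtain ⟨hσ, hG⟩ := σstar_spec hx
    have hxσ : x < σstar x := by linarith [hx.2, hσ.1]
    have hcross : G (σstar x) + 2 * F x = 0 := by linarith
    exact ⟨hxσ, (EI_eq_EII hx.1 hxσ hcross).symm,
      EI_lt_E0_of_crossing hx.1 hxσ hcross (A_σstar_lt hx)⟩
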